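/- Let p be a prime with p ≡ 3 (mod 4), let C = {c_S : S ⊆ GF(p)} be the LQR code, V = {v_S : S ⊆ GF(p)}, and C̄ = C ∪ V. Then C̄ is the smallest GF(2)-linear subspace of GF(2)^{4p} containing C, and C̄ has dimension p + 1 (i.e., |C̄| = 2^{p+1}). -/
import Mathlib


open Finset

/-- `r_S = Σ_{i∈S} x^i`, viewed as an element of `R = GF(2)[x]/(x^p-1)`
(identified with functions `ZMod p → ZMod 2` recording coefficients). -/
def rOf {p : ℕ} (S : Finset (ZMod p)) : ZMod p → ZMod 2 :=
  fun a => if a ∈ S then 1 else 0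

/-- Multiplication in `R = GF(2)[x]/(x^p-1)` (cyclic convolution of coefficients). -/
def conv {p : ℕ} [NeZero p] (f g : ZMod p → ZMod 2) : ZMod p → ZMod 2 :=
  fun a => ∑ b : ZMod p, f b * g (a - b)

/-- Hamming weight of an element of `R`. -/
def wt {p : ℕ} [NeZero p] (f : ZMod p → ZMod 2) : ℕ :=
  (Finset.univ.filter fun a => f a ≠ 0).card

/-- The set `Q` of quadratic residues in `GF(p)ˣ`. -/
def Qset (p : ℕ) [NeZero p] : Finset (ZMod p) :=
  Finset.univ.filter fun a => a ≠ 0 ∧ ∃ b : ZMod p, b ^ 2 = a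

/-- The set `N` of quadratic non-residues in `GF(p)ˣ`. -/
def Nset (p : ℕ) [NeZero p] : Finset (ZMod p) :=
  Finset.univ.filter fun a => a ≠ 0 ∧ ¬∃ b : ZMod p, b ^ 2 = a

/-- The character sum `Σ_{a ∈ GF(p)} χ(f_S(a))` where `f_S(x) = Π_{b∈S}(x-b)` and
`χ` is the Legendre character. -/
def charSum (p : ℕ) [Fact p.Prime] (S : Finset (ZMod p)) : ℤ :=
  ∑ a : ZMod p, quadraticChar (ZMod p) (∏ b ∈ S, (a - b))

/-- `|X_S(GF(p))|`: the number of affine points of `y² = f_S(x)` over `GF(p)`,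
plus `2` points at infinity if `|S|` is even and `1` if `|S|` is odd. -/
noncomputable def Xcard (p : ℕ) (S : Finset (ZMod p)) : ℕ :=
  Nat.card {xy : ZMod p × ZMod p // xy.2 ^ 2 = ∏ b ∈ S, (xy.1 - b)} +
    if Even S.card then 2 else 1

/-- The QQR codeword `(r_N r_S, r_Q r_S)`. -/
def qqr (p : ℕ) [NeZero p] (S : Finset (ZMod p)) :
    (ZMod p → ZMod 2) × (ZMod p → ZMod 2) :=
  (conv (rOf (Nset p)) (rOf S), conv (rOf (Qset p)) (rOf S))

/-- Hamming weight of a length-`2p` vector identified with a pair of elements of `R`. -/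
def wt2 {p : ℕ} [NeZero p] (x : (ZMod p → ZMod 2) × (ZMod p → ZMod 2)) : ℕ :=
  wt x.1 + wt x.2

/-- The LQR codeword `c_S = (r_N r_S, r_Q r_S, r_N r_S*, r_Q r_S*)`. -/
def lqr (p : ℕ) [NeZero p] (S : Finset (ZMod p)) :
    ((ZMod p → ZMod 2) × (ZMod p → ZMod 2)) × ((ZMod p → ZMod 2) × (ZMod p → ZMod 2)) :=
  (qqr p S, qqr p Sᶜ)

/-- Hamming weight of a length-`4p` vector identified with a 4-tuple of elements of `R`. -/
def wt4 {p : ℕ} [NeZero p]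
    (x : ((ZMod p → ZMod 2) × (ZMod p → ZMod 2)) × ((ZMod p → ZMod 2) × (ZMod p → ZMod 2))) : ℕ :=
  wt2 x.1 + wt2 x.2

/-! ### Auxiliary material -/

private lemma zmod2_cases (x : ZMod 2) : x = 0 ∨ x = 1 := by revert x; decide

/-- The convolution-by-`(r_N, r_Q)` map, as a linear map. -/
def Tmap (p : ℕ) [NeZero p] :
    (ZMod p → ZMod 2) →ₗ[ZMod 2] ((ZMod p → ZMod 2) × (ZMod p → ZMod 2)) where
  toFun f := (conv (rOf (Nset p)) f, conv (rOf (Qset p)) f)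
  map_add' f g := by
    refine Prod.ext ?_ ?_ <;> funext a <;>
      simp [conv, mul_add, Finset.sum_add_distrib]
  map_smul' m f := by
    refine Prod.ext ?_ ?_ <;> funext a <;>
      simp [conv, Finset.mul_sum, mul_left_comm]

lemma qqr_eq_Tmap (p : ℕ) [NeZero p] (S : Finset (ZMod p)) :
    qqr p S = Tmap p (rOf S) := rfl

lemma rOf_supp {p : ℕ} [NeZero p] (f : ZMod p → ZMod 2) :
    rOf (Finset.univ.filter fun a => f a = 1) = f := by
  funext a
  rcases zmod2_cases (f a) with h | h <;> simp [rOf, h]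

lemma rOf_compl {p : ℕ} [NeZero p] (S : Finset (ZMod p)) :
    rOf Sᶜ = rOf S + fun _ => 1 := by
  funext a
  by_cases h : a ∈ S <;> simp [rOf, h] <;> decide

lemma rOf_empty (p : ℕ) : rOf (∅ : Finset (ZMod p)) = 0 := by
  funext a; simp [rOf]

lemma card_Nset_odd (p : ℕ) [Fact p.Prime] (hp4 : p % 4 = 3) :
    (Nset p).card % 2 = 1 := by
  have hp := Fact.out (p := p.Prime)
  have hp2 : p ≠ 2 := by omega
  have hchar : ringChar (ZMod p) ≠ 2 := by rw [ZMod.ringChar_zmod_n]; exact hp2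
  have hsum := quadraticChar_sum_zero hchar
  have hpt : ∀ a : ZMod p, (quadraticChar (ZMod p)) a
      = (if a ∈ Qset p then (1 : ℤ) else 0) - (if a ∈ Nset p then 1 else 0) := by
    intro a
    by_cases ha : a = 0
    · simp [ha, Qset, Nset]
    · by_cases hsq : ∃ b : ZMod p, b ^ 2 = a
      · have hiq : IsSquare a := by
          obtain ⟨b, hb⟩ := hsq; exact ⟨b, by rw [← hb]; ring⟩
        rw [(quadraticChar_one_iff_isSquare ha).mpr hiq]
        have hmemQ : a ∈ Qset p := Finset.mem_filter.mpr ⟨Finset.mem_univ _, ha, hsq⟩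
        have hmemN : a ∉ Nset p := fun hm => ((Finset.mem_filter.mp hm).2).2 hsq
        rw [if_pos hmemQ, if_neg hmemN]; norm_num
      · have hiq : ¬ IsSquare a := by
          rintro ⟨b, rfl⟩; exact hsq ⟨b, by ring⟩
        rw [quadraticChar_neg_one_iff_not_isSquare.mpr hiq]
        have hmemN : a ∈ Nset p := Finset.mem_filter.mpr ⟨Finset.mem_univ _, ha, hsq⟩
        have hmemQ : a ∉ Qset p := fun hm => hsq ((Finset.mem_filter.mp hm).2).2
        rw [if_neg hmemQ, if_pos hmemN]; norm_num
  rw [Finset.sum_congr rfl fun a _ => hpt a, Finset.sum_sub_distrib] at hsum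
  simp only [Finset.sum_boole, Finset.filter_mem_eq_inter, Finset.univ_inter,
    sub_eq_zero, Nat.cast_inj] at hsum
  have hunion : (Qset p) ∪ (Nset p) = Finset.univ.filter (fun a : ZMod p => a ≠ 0) := by
    ext a
    simp only [Qset, Nset, Finset.mem_union, Finset.mem_filter, Finset.mem_univ, true_and]
    tauto
  have hdisj : Disjoint (Qset p) (Nset p) := by
    rw [Finset.disjoint_left]
    intro a haQ haN
    exact ((Finset.mem_filter.mp haN).2).2 ((Finset.mem_filter.mp haQ).2).2
  have hcard : (Qset p).card + (Nset p).card = p - 1 := by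
    rw [← Finset.card_union_of_disjoint hdisj, hunion, Finset.filter_ne',
      Finset.card_erase_of_mem (Finset.mem_univ 0), Finset.card_univ, ZMod.card]
  omega

lemma Tmap_ker (p : ℕ) [Fact p.Prime] (hp4 : p % 4 = 3) (f : ZMod p → ZMod 2)
    (h : Tmap p f = 0) : f = 0 := by
  have hN : conv (rOf (Nset p)) f = 0 := congrArg Prod.fst h
  have hQ : conv (rOf (Qset p)) f = 0 := congrArg Prod.snd h
  have hconst : ∀ a, f a = ∑ c : ZMod p, f c := by
    intro a
    have hNa : ∑ b : ZMod p, rOf (Nset p) b * f (a - b) = 0 := congrFun hN a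
    have hQa : ∑ b : ZMod p, rOf (Qset p) b * f (a - b) = 0 := congrFun hQ a
    have h1 : ∑ b : ZMod p, (rOf (Nset p) b + rOf (Qset p) b) * f (a - b) = 0 := by
      simp only [add_mul]
      rw [Finset.sum_add_distrib, hNa, hQa, add_zero]
    have h2 : ∀ b : ZMod p, rOf (Nset p) b + rOf (Qset p) b
        = if b = 0 then 0 else 1 := by
      intro b
      simp only [rOf]
      by_cases hb : b = 0
      · rw [if_pos hb,
          if_neg (fun hm : b ∈ Nset p => ((Finset.mem_filter.mp hm).2).1 hb),
          if_neg (fun hm : b ∈ Qset p => ((Finset.mem_filter.mp hm).2).1 hb)]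
        norm_num
      · rw [if_neg hb]
        by_cases hsq : ∃ c : ZMod p, c ^ 2 = b
        · have hmQ : b ∈ Qset p := Finset.mem_filter.mpr ⟨Finset.mem_univ _, hb, hsq⟩
          have hmN : b ∉ Nset p := fun hm => ((Finset.mem_filter.mp hm).2).2 hsq
          rw [if_pos hmQ, if_neg hmN]
          norm_num
        · have hmN : b ∈ Nset p := Finset.mem_filter.mpr ⟨Finset.mem_univ _, hb, hsq⟩
          have hmQ : b ∉ Qset p := fun hm => hsq ((Finset.mem_filter.mp hm).2).2
          rw [if_pos hmN, if_neg hmQ]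
          norm_num
    rw [Finset.sum_congr rfl fun b _ => by rw [h2 b]] at h1
    have h3 : ∀ b : ZMod p, (if b = 0 then (0 : ZMod 2) else 1) * f (a - b)
        = f (a - b) + (if b = 0 then f (a - b) else 0) := by
      intro b
      by_cases hb : b = 0 <;> simp [hb, CharTwo.add_self_eq_zero]
    rw [Finset.sum_congr rfl fun b _ => h3 b, Finset.sum_add_distrib,
      Finset.sum_ite_eq' Finset.univ (0 : ZMod p) (fun b => f (a - b))] at h1
    simp only [Finset.mem_univ, if_true, sub_zero] at h1
    have h4 : ∑ b : ZMod p, f (a - b) = ∑ c : ZMod p, f c :=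
      Fintype.sum_equiv (Equiv.subLeft a) _ _ (fun b => rfl)
    rw [h4] at h1
    rw [CharTwo.add_eq_iff_eq_add, zero_add] at h1
    exact h1.symm
  by_cases hs : ∑ c : ZMod p, f c = 0
  · funext a; rw [hconst a, hs]; rfl
  · exfalso
    have hs1 : ∑ c : ZMod p, f c = 1 := (zmod2_cases _).resolve_left hs
    have hf1 : ∀ a, f a = 1 := fun a => (hconst a).trans hs1
    have hNa : conv (rOf (Nset p)) f 0 = 0 := congrFun hN 0
    have hc : ((Nset p).card : ZMod 2) = 0 := by
      rw [← hNa]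
      simp [conv, rOf, hf1, Finset.sum_boole, Finset.filter_mem_eq_inter]
    rw [← ZMod.natCast_mod, card_Nset_odd p hp4] at hc
    simp at hc

lemma Tmap_inj (p : ℕ) [Fact p.Prime] (hp4 : p % 4 = 3) :
    Function.Injective (Tmap p) :=
  LinearMap.ker_eq_bot.mp (LinearMap.ker_eq_bot'.mpr fun f h => Tmap_ker p hp4 f h)

/-- The full linear parametrization of `C̄`. -/
def Tfull (p : ℕ) [NeZero p] :
    ((ZMod p → ZMod 2) × ZMod 2) →ₗ[ZMod 2]
      (((ZMod p → ZMod 2) × (ZMod p → ZMod 2)) ×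
        ((ZMod p → ZMod 2) × (ZMod p → ZMod 2))) where
  toFun x := (Tmap p x.1, Tmap p x.1 + x.2 • Tmap p (fun _ => 1))
  map_add' x y := by
    refine Prod.ext ?_ ?_ <;> simp [map_add, add_smul] <;> module
  map_smul' m x := by
    refine Prod.ext ?_ ?_ <;> simp [smul_smul] <;> module

lemma lqr_eq_Tfull (p : ℕ) [NeZero p] (S : Finset (ZMod p)) :
    lqr p S = Tfull p (rOf S, 1) := by
  unfold lqr Tfull
  refine Prod.ext (qqr_eq_Tmap p S) ?_
  simp only [LinearMap.coe_mk, AddHom.coe_mk]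
  rw [qqr_eq_Tmap, rOf_compl, map_add, one_smul]

lemma vS_eq_Tfull (p : ℕ) [NeZero p] (S : Finset (ZMod p)) :
    (qqr p S, qqr p S) = Tfull p (rOf S, 0) := by
  unfold Tfull
  refine Prod.ext (qqr_eq_Tmap p S) ?_
  simp only [LinearMap.coe_mk, AddHom.coe_mk, zero_smul, add_zero]
  exact qqr_eq_Tmap p S

lemma span_eq_range_Tfull (p : ℕ) [Fact p.Prime] :
    Submodule.span (ZMod 2) (Set.range (lqr p)) = LinearMap.range (Tfull p) := by
  apply le_antisymm
  · rw [Submodule.span_le]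
    rintro _ ⟨S, rfl⟩
    exact ⟨(rOf S, 1), (lqr_eq_Tfull p S).symm⟩
  · rintro _ ⟨⟨f, ε⟩, rfl⟩
    rcases zmod2_cases ε with rfl | rfl
    · have : Tfull p (f, 0) = lqr p (Finset.univ.filter fun a => f a = 1) + lqr p ∅ := by
        rw [lqr_eq_Tfull, lqr_eq_Tfull, rOf_supp, rOf_empty, ← map_add]
        congr 1
        refine Prod.ext (add_zero f).symm ?_
        show (0 : ZMod 2) = 1 + 1
        decide
      rw [this]
      exact Submodule.add_mem _ (Submodule.subset_span ⟨_, rfl⟩)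
        (Submodule.subset_span ⟨_, rfl⟩)
    · have : Tfull p (f, 1) = lqr p (Finset.univ.filter fun a => f a = 1) := by
        rw [lqr_eq_Tfull, rOf_supp]
      rw [this]
      exact Submodule.subset_span ⟨_, rfl⟩

lemma Tfull_inj (p : ℕ) [Fact p.Prime] (hp4 : p % 4 = 3) :
    Function.Injective (Tfull p) := by
  have hone : (fun _ : ZMod p => (1 : ZMod 2)) ≠ 0 := by
    intro h
    have := congrFun h 0
    simp at this
  have hc : Tmap p (fun _ => 1) ≠ 0 := fun h => hone (Tmap_ker p hp4 _ h)
  apply LinearMap.ker_eq_bot.mp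
  apply LinearMap.ker_eq_bot'.mpr
  rintro ⟨f, ε⟩ h
  have h1 : Tmap p f = 0 := congrArg Prod.fst h
  have h2 : Tmap p f + ε • Tmap p (fun _ => 1) = 0 := congrArg Prod.snd h
  rw [h1, zero_add] at h2
  have hε : ε = 0 := by
    rcases zmod2_cases ε with rfl | rfl
    · rfl
    · rw [one_smul] at h2; exact absurd h2 hc
  have hf : f = 0 := Tmap_ker p hp4 f h1
  rw [hf, hε]
  rfl

/-- For `p ≡ 3 (mod 4)`, the smallest linear subspace `C̄` of `GF(2)^{4p}`
containing the LQR code `C` is `C ∪ V`, where `V = {v_S}`, and it has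
dimension `p + 1`. -/
theorem lqr_span_three_mod_four (p : ℕ) [Fact p.Prime] (hp4 : p % 4 = 3) :
    (Submodule.span (ZMod 2) (Set.range (lqr p)) :
        Set (((ZMod p → ZMod 2) × (ZMod p → ZMod 2)) ×
          ((ZMod p → ZMod 2) × (ZMod p → ZMod 2)))) =
      Set.range (lqr p) ∪
        Set.range (fun S : Finset (ZMod p) => (qqr p S, qqr p S)) ∧
    Module.finrank (ZMod 2) (Submodule.span (ZMod 2) (Set.range (lqr p))) = p + 1 := by
  constructor
  · rw [span_eq_range_Tfull p]
    ext x
    simp only [SetLike.mem_coe, LinearMap.mem_range, Set.mem_union, Set.mem_range]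
    constructor
    · rintro ⟨⟨f, ε⟩, rfl⟩
      rcases zmod2_cases ε with rfl | rfl
      · exact Or.inr ⟨Finset.univ.filter fun a => f a = 1, by
          rw [vS_eq_Tfull, rOf_supp]⟩
      · exact Or.inl ⟨Finset.univ.filter fun a => f a = 1, by
          rw [lqr_eq_Tfull, rOf_supp]⟩
    · rintro (⟨S, rfl⟩ | ⟨S, rfl⟩)
      · exact ⟨(rOf S, 1), (lqr_eq_Tfull p S).symm⟩
      · exact ⟨(rOf S, 0), (vS_eq_Tfull p S).symm⟩
  · rw [span_eq_range_Tfull p, LinearMap.finrank_range_of_inj (Tfull_inj p hp4),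
      Module.finrank_prod, Module.finrank_pi, Module.finrank_self, ZMod.card]
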